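/- Let n be a positive integer, H a complex Hilbert space, Σ ⊆ 𝔽ₙ⁺ a nonempty admissible set, and L : Σ → B(H). Then there exist a complex Hilbert space E, a linear isometry ι : H → E, and isometries W₁,…,Wₙ ∈ B(E) with pairwise orthogonal ranges (Wᵢ*Wᵢ = I and Wᵢ*Wⱼ = 0 for i ≠ j) such that W_σ ∘ ι ∘ L(g₀) = ι ∘ L(σ) for every σ ∈ Σ — equivalently, there is a *-representation π of the Cuntz–Toeplitz algebra C*(S₁,…,Sₙ) on E ⊇ H with L(p) = π(p(S₁,…,Sₙ))L(g₀) for all p ∈ ℂΣ — if and only if K₁ = K₂. -/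

import Mathlib

/-!
If the `Wᵢ` exist, then `L(u)* L(v) = (ι L(g₀))* W_u* W_v (ι L(g₀))` for `u, v ∈ Σ`, and the
Cuntz–Toeplitz relations give `W_α* W_σ = W_{σ∖α}`, `(W_{α∖σ})*` or `0` according as `α ≤ σ`,
`σ < α` or neither; this turns `K₁` into `K₂`.

Conversely, `K₁ = K₂` at `((gᵢ, u), (gⱼ, v))` says `L(gᵢu)* L(gⱼv) = δᵢⱼ L(u)* L(v)`. Hence
the closed span of the pairs `(L(w)h, L(gᵢw)h)` is the graph of an isometry, which extends by
zero to a partial isometry `Aᵢ` on `H`, and the `Aᵢ` have pairwise orthogonal ranges. Such a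
family dilates to isometries with orthogonal ranges on the full Fock space `ℓ²(𝔽ₙ⁺, H)`, with
`H` sitting at the empty word: `Wᵢ` acts as `Aᵢ` on the vacuum component and moves everything
else, including the part of the vacuum component outside the initial space of `Aᵢ`, onto the
words beginning with `gᵢ`.
-/

open scoped InnerProductSpace ComplexOrder ComplexInnerProductSpace Classical
open ContinuousLinearMap

noncomputable section

universe u

/-- Words in the free monoid `𝔽ₙ⁺` on `n` generators (the empty word is `g₀`). -/
abbrev Wd (n : ℕ) := List (Fin n)

/-- A set `Σ ⊆ 𝔽ₙ⁺` is admissible if `αβ ∈ Σ` implies `β ∈ Σ`. -/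
def Adm {n : ℕ} (S : Set (Wd n)) : Prop := ∀ α β : Wd n, α ++ β ∈ S → β ∈ S

/-- `σ ≤ α` : `σ` is a prefix of `α`, i.e. `α = στ` for some `τ`. -/
def pfx {n : ℕ} (σ α : Wd n) : Prop := ∃ τ : Wd n, α = σ ++ τ

/-- `α ∖ σ` : the unique `τ` with `α = στ` when `σ ≤ α`. -/
def wq {n : ℕ} (α σ : Wd n) : Wd n := α.drop σ.length

/-- `W_α = W_{i₁} ⋯ W_{i_k}` for a word `α = g_{i₁} ⋯ g_{i_k}`, `W_{g₀} = I`. -/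
def wordOp {E : Type*} [NormedAddCommGroup E] [InnerProductSpace ℂ E]
    {n : ℕ} (T : Fin n → (E →L[ℂ] E)) (α : Wd n) : E →L[ℂ] E := (α.map T).prod

variable {H : Type u} [NormedAddCommGroup H] [InnerProductSpace ℂ H] [CompleteSpace H]

/-- `K₁((α,β),(σ,γ)) = L(αβ)* L(σγ)`. -/
def K1 {n : ℕ} (L : Wd n → (H →L[ℂ] H)) (x y : Wd n × Wd n) : H →L[ℂ] H :=
  adjoint (L (x.1 ++ x.2)) * L (y.1 ++ y.2)

/-- `K₂((α,β),(σ,γ)) = L(β)* L((σ∖α)γ)` if `α ≤ σ`, `L((α∖σ)β)* L(γ)` if `σ < α`,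
and `0` otherwise. -/
def K2 {n : ℕ} (L : Wd n → (H →L[ℂ] H)) (x y : Wd n × Wd n) : H →L[ℂ] H :=
  if pfx x.1 y.1 then adjoint (L x.2) * L (wq y.1 x.1 ++ y.2)
  else if pfx y.1 x.1 then adjoint (L (wq x.1 y.1 ++ x.2)) * L y.2
  else 0

/-- A dilation of `L` to a Hilbert space `E ⊇ H` carrying isometries `W₁,…,Wₙ` with
pairwise orthogonal ranges (equivalently, a *-representation of `C*(S₁,…,Sₙ)`), with
`W_σ ∘ ι ∘ L(g₀) = ι ∘ L(σ)` for all `σ ∈ Σ`. -/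
structure IsomRep (n : ℕ) (H : Type u) [NormedAddCommGroup H] [InnerProductSpace ℂ H]
    [CompleteSpace H] (S : Set (Wd n)) (L : Wd n → (H →L[ℂ] H)) : Type (u + 1) where
  E : Type u
  [instN : NormedAddCommGroup E]
  [instI : InnerProductSpace ℂ E]
  [instC : CompleteSpace E]
  ι : H →ₗᵢ[ℂ] E
  W : Fin n → (E →L[ℂ] E)
  isom : ∀ i, adjoint (W i) * W i = 1
  orth : ∀ i j, i ≠ j → adjoint (W i) * W j = 0
  moment : ∀ σ ∈ S, ∀ h : H, wordOp W σ (ι ((L ([] : Wd n)) h)) = ι ((L σ) h)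

open scoped lp

section Sesquilinear

variable {𝕜 M N : Type*} [RCLike 𝕜] [NormedAddCommGroup M] [NormedSpace 𝕜 M]
  [NormedAddCommGroup N] [NormedSpace 𝕜 N]

theorem ContinuousLinearMap.eq_zero_of_mem_closure_span (B : M →L⋆[𝕜] N →L[𝕜] 𝕜)
    {s : Set M} {t : Set N} (h : ∀ x ∈ s, ∀ y ∈ t, B x y = 0) {x : M} {y : N}
    (hx : x ∈ (Submodule.span 𝕜 s).topologicalClosure)
    (hy : y ∈ (Submodule.span 𝕜 t).topologicalClosure) : B x y = 0 := by
  have hs : ∀ x ∈ s, (Submodule.span 𝕜 t).topologicalClosure ≤ (B x).ker := fun x hx =>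
    Submodule.topologicalClosure_minimal _ (Submodule.span_le.2 (h x hx)) (B x).isClosed_ker
  have ht : (Submodule.span 𝕜 s).topologicalClosure ≤ (B.flip y).ker :=
    Submodule.topologicalClosure_minimal _ (Submodule.span_le.2 fun x hx' => hs x hx' hy)
      (B.flip y).isClosed_ker
  exact ht hx

end Sesquilinear

section Graph

variable {𝕜 E F : Type*} [RCLike 𝕜] [NormedAddCommGroup E] [InnerProductSpace 𝕜 E]
  [NormedAddCommGroup F] [InnerProductSpace 𝕜 F]

theorem inner_snd_eq_of_mem_closure_span {s t : Set (E × F)} (c : 𝕜)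
    (h : ∀ p ∈ s, ∀ q ∈ t, ⟪p.2, q.2⟫_𝕜 = c * ⟪p.1, q.1⟫_𝕜) {p q : E × F}
    (hp : p ∈ (Submodule.span 𝕜 s).topologicalClosure)
    (hq : q ∈ (Submodule.span 𝕜 t).topologicalClosure) :
    ⟪p.2, q.2⟫_𝕜 = c * ⟪p.1, q.1⟫_𝕜 := by
  let B : E × F →L⋆[𝕜] E × F →L[𝕜] 𝕜 :=
    (innerSL 𝕜).bilinearComp (snd 𝕜 E F) (snd 𝕜 E F) -
      c • (innerSL 𝕜).bilinearComp (fst 𝕜 E F) (fst 𝕜 E F)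
  have := B.eq_zero_of_mem_closure_span (fun p hp q hq => ?_) hp hq
  · simpa [B, sub_eq_zero] using this
  · simpa [B, sub_eq_zero] using h p hp q hq

theorem Submodule.isClosed_map_fst_of_norm_snd_eq [CompleteSpace E] [CompleteSpace F]
    {Γ : Submodule 𝕜 (E × F)} (hΓ : IsClosed (Γ : Set (E × F)))
    (hnorm : ∀ p ∈ Γ, ‖p.2‖ = ‖p.1‖) :
    IsClosed (Γ.map (LinearMap.fst 𝕜 E F) : Set E) := by
  have : CompleteSpace Γ := hΓ.completeSpace_coe
  let fstΓ : Γ →ₗᵢ[𝕜] E :=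
    ⟨(LinearMap.fst 𝕜 E F).comp Γ.subtype, fun p => by simp [Prod.norm_def, hnorm p p.2]⟩
  convert fstΓ.isometry.isClosedEmbedding.isClosed_range using 1
  ext x
  exact ⟨fun ⟨p, hp, hx⟩ => ⟨⟨p, hp⟩, hx⟩, fun ⟨p, hx⟩ => ⟨p, p.2, hx⟩⟩

theorem Submodule.snd_eq_zero_of_norm_snd_eq {Γ : Submodule 𝕜 (E × F)}
    (hnorm : ∀ p ∈ Γ, ‖p.2‖ = ‖p.1‖) (p : E × F) (hp : p ∈ Γ) (h1 : p.1 = 0) : p.2 = 0 := by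
  rw [← norm_eq_zero, hnorm p hp, h1, norm_zero]

variable (Γ : Submodule 𝕜 (E × F)) [(Γ.map (LinearMap.fst 𝕜 E F)).HasOrthogonalProjection]

def partialIsometryOfGraph (hnorm : ∀ p ∈ Γ, ‖p.2‖ = ‖p.1‖) : E →L[𝕜] F :=
  LinearMap.mkContinuous Γ.toLinearPMap.toFun 1 (fun x => by
      rw [one_mul]
      exact (hnorm _ (Γ.mem_graph_toLinearPMap (Γ.snd_eq_zero_of_norm_snd_eq hnorm) x)).le) ∘L
    (Γ.map (LinearMap.fst 𝕜 E F)).orthogonalProjectionOnto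

variable {Γ}

theorem starProjection_partialIsometryOfGraph_mem (hnorm : ∀ p ∈ Γ, ‖p.2‖ = ‖p.1‖) (x : E) :
    ((Γ.map (LinearMap.fst 𝕜 E F)).starProjection x, partialIsometryOfGraph Γ hnorm x) ∈ Γ :=
  Γ.mem_graph_toLinearPMap (Γ.snd_eq_zero_of_norm_snd_eq hnorm) _

theorem partialIsometryOfGraph_apply_fst (hnorm : ∀ p ∈ Γ, ‖p.2‖ = ‖p.1‖) {p : E × F}
    (hp : p ∈ Γ) : partialIsometryOfGraph Γ hnorm p.1 = p.2 := by
  have hp1 : p.1 ∈ Γ.map (LinearMap.fst 𝕜 E F) := ⟨p, hp, rfl⟩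
  have := starProjection_partialIsometryOfGraph_mem hnorm p.1
  rw [Submodule.starProjection_eq_self_iff.2 hp1] at this
  exact (Γ.existsUnique_from_graph (Γ.snd_eq_zero_of_norm_snd_eq hnorm _) hp1).unique this hp

end Graph

theorem Function.Injective.apply₂_extend_zero {α β γ δ ε : Type*} [Zero γ] [Zero δ] [Zero ε]
    {g : α → β} (hg : g.Injective) (F : γ → δ → ε) (hF : F 0 0 = 0) (f₁ : α → γ) (f₂ : α → δ)
    (b : β) :
    F (extend g f₁ 0 b) (extend g f₂ 0 b) = extend g (fun a => F (f₁ a) (f₂ a)) 0 b := by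
  by_cases hb : ∃ a, g a = b
  · obtain ⟨a, rfl⟩ := hb
    simp only [hg.extend_apply]
  · simp only [extend_apply' _ _ _ hb, Pi.zero_apply, hF]

theorem extend_cons_eq_zero {ι α : Type*} [Zero α] {i : ι} (f : List ι → α) {w : List ι}
    (hw : w.head? ≠ some i) : Function.extend (List.cons i) f 0 w = 0 :=
  Function.extend_apply' _ _ _ fun ⟨_, h⟩ => hw (h ▸ rfl)

theorem Submodule.inner_starProjection_left_eq_inner_starProjection_starProjection {𝕜 E : Type*}
    [RCLike 𝕜] [NormedAddCommGroup E] [InnerProductSpace 𝕜 E] (K : Submodule 𝕜 E)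
    [K.HasOrthogonalProjection] (u v : E) :
    ⟪K.starProjection u, v⟫_𝕜 = ⟪K.starProjection u, K.starProjection v⟫_𝕜 := by
  rw [K.inner_starProjection_left_eq_right, K.inner_starProjection_left_eq_right,
    K.starProjection_eq_self_iff.2 (K.starProjection_apply_mem v)]

section Fock

variable {𝕜 ι E : Type*} [RCLike 𝕜] [NormedAddCommGroup E] [InnerProductSpace 𝕜 E]

theorem memℓp_extend_cons (i : ι) (f : ℓ²(List ι, E)) :
    Memℓp (Function.extend (List.cons i) (f : List ι → E) 0) 2 := by
  have h2 : (0 : ℝ) < (2 : ENNReal).toReal := by norm_num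
  have hnorm w := (List.cons_injective (a := i)).apply₂_extend_zero
    (fun x (_ : E) => ‖x‖ ^ (2 : ENNReal).toReal) (by simp) f f w
  rw [memℓp_gen_iff h2]
  simpa only [hnorm, summable_extend_zero List.cons_injective] using (memℓp_gen_iff h2).1 f.2

variable (𝕜) in
def lp.consShift (i : ι) : ℓ²(List ι, E) →ₗᵢ[𝕜] ℓ²(List ι, E) :=
  LinearMap.isometryOfInner
    { toFun := fun f => ⟨Function.extend (List.cons i) f 0, memℓp_extend_cons i f⟩
      map_add' := fun f g => lp.ext <| funext fun w =>
        (List.cons_injective.apply₂_extend_zero (· + ·) (add_zero 0) f g w).symm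
      map_smul' := fun c f => lp.ext <| funext fun w =>
        (List.cons_injective.apply₂_extend_zero (fun x (_ : E) => c • x) (smul_zero c) f f w).symm }
    fun f g => by
      rw [lp.inner_eq_tsum, lp.inner_eq_tsum]
      exact (tsum_congr fun w => List.cons_injective.apply₂_extend_zero
        (fun x y : E => ⟪x, y⟫_𝕜) (inner_zero_left 0) f g w).trans
        (tsum_extend_zero List.cons_injective _)

theorem lp.consShift_apply (i : ι) (f : ℓ²(List ι, E)) (w : List ι) :
    lp.consShift 𝕜 i f w = Function.extend (List.cons i) f 0 w := rfl

theorem lp.consShift_apply_nil (i : ι) (f : ℓ²(List ι, E)) : lp.consShift 𝕜 i f [] = 0 :=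
  extend_cons_eq_zero _ (by simp)

theorem lp.inner_consShift_consShift [DecidableEq ι] (i j : ι) (f g : ℓ²(List ι, E)) :
    ⟪lp.consShift 𝕜 i f, lp.consShift 𝕜 j g⟫_𝕜 = if i = j then ⟪f, g⟫_𝕜 else 0 := by
  split_ifs with hij
  · rw [hij, LinearIsometry.inner_map_map]
  · rw [lp.inner_eq_tsum]
    refine (tsum_congr fun w => ?_).trans tsum_zero
    simp only [lp.consShift_apply]
    by_cases hi : w.head? = some i
    · rw [extend_cons_eq_zero (i := j) _ (hi ▸ fun h => hij (Option.some_injective _ h)),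
        inner_zero_right]
    · rw [extend_cons_eq_zero _ hi, inner_zero_left]

variable (𝕜 ι E) in
def lp.vacuum : E →ₗᵢ[𝕜] ℓ²(List ι, E) :=
  ⟨(lp.singleContinuousLinearMap 𝕜 (fun _ => E) 2 []).toLinearMap,
    lp.norm_single (E := fun _ : List ι => E) (p := 2) (by norm_num) []⟩

theorem lp.inner_vacuum_left (x : E) (f : ℓ²(List ι, E)) :
    ⟪lp.vacuum 𝕜 ι E x, f⟫_𝕜 = ⟪x, f []⟫_𝕜 :=
  lp.inner_single_left _ _ _

theorem lp.inner_vacuum_right (f : ℓ²(List ι, E)) (x : E) :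
    ⟪f, lp.vacuum 𝕜 ι E x⟫_𝕜 = ⟪f [], x⟫_𝕜 :=
  lp.inner_single_right _ _ _

variable (K : ι → Submodule 𝕜 E) [∀ i, (K i).HasOrthogonalProjection] (A : ι → E →L[𝕜] E)

def fockDilation (i : ι) : ℓ²(List ι, E) →L[𝕜] ℓ²(List ι, E) :=
  (lp.vacuum 𝕜 ι E).toContinuousLinearMap ∘L A i ∘L lp.evalCLM 𝕜 (fun _ => E) 2 [] +
    (lp.consShift 𝕜 i).toContinuousLinearMap ∘L
      (1 - (lp.vacuum 𝕜 ι E).toContinuousLinearMap ∘L (K i).starProjection ∘L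
        lp.evalCLM 𝕜 (fun _ => E) 2 [])

theorem fockDilation_apply (i : ι) (f : ℓ²(List ι, E)) :
    fockDilation K A i f = lp.vacuum 𝕜 ι E (A i (f [])) +
      lp.consShift 𝕜 i (f - lp.vacuum 𝕜 ι E ((K i).starProjection (f []))) := rfl

theorem fockDilation_vacuum {i : ι} {x : E} (hx : x ∈ K i) :
    fockDilation K A i (lp.vacuum 𝕜 ι E x) = lp.vacuum 𝕜 ι E (A i x) := by
  have hx0 : (lp.vacuum 𝕜 ι E x : ℓ²(List ι, E)) [] = x := lp.single_apply_self _ _ _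
  rw [fockDilation_apply, hx0, Submodule.starProjection_eq_self_iff.2 hx, sub_self, map_zero,
    add_zero]

theorem inner_fockDilation [DecidableEq ι]
    (hA : ∀ i j x y, ⟪A i x, A j y⟫_𝕜 =
      if i = j then ⟪(K i).starProjection x, (K j).starProjection y⟫_𝕜 else 0)
    (i j : ι) (f g : ℓ²(List ι, E)) :
    ⟪fockDilation K A i f, fockDilation K A j g⟫_𝕜 = if i = j then ⟪f, g⟫_𝕜 else 0 := by
  simp only [fockDilation_apply, inner_add_left, inner_add_right, LinearIsometry.inner_map_map,
    lp.inner_vacuum_left, lp.inner_vacuum_right, lp.consShift_apply_nil, inner_zero_left,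
    inner_zero_right, lp.inner_consShift_consShift, hA]
  split_ifs with hij
  · subst hij
    simp only [inner_sub_left, inner_sub_right, LinearIsometry.inner_map_map,
      lp.inner_vacuum_left, lp.inner_vacuum_right]
    rw [← (K i).inner_starProjection_left_eq_right (f []),
      (K i).inner_starProjection_left_eq_inner_starProjection_starProjection (f []) (g [])]
    ring
  · simp

end Fock

theorem ContinuousLinearMap.adjoint_mul_eq_of_inner {𝕜 E : Type*} [RCLike 𝕜]
    [NormedAddCommGroup E] [InnerProductSpace 𝕜 E] [CompleteSpace E] {A B C : E →L[𝕜] E}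
    (h : ∀ x y, ⟪A x, B y⟫_𝕜 = ⟪x, C y⟫_𝕜) : adjoint A * B = C :=
  ext fun y => ext_inner_left 𝕜 fun x => by rw [mul_apply_eq_comp, adjoint_inner_right, h]

theorem star_prod_map_mul_prod_map {M ι : Type*} [MonoidWithZero M] [StarMul M] [DecidableEq ι]
    (W : ι → M) (hisom : ∀ i, star (W i) * W i = 1)
    (horth : ∀ i j, i ≠ j → star (W i) * W j = 0) (α σ : List ι) :
    star (α.map W).prod * (σ.map W).prod =
      if α <+: σ then ((σ.drop α.length).map W).prod
      else if σ <+: α then star ((α.drop σ.length).map W).prod else 0 := by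
  induction α generalizing σ with
  | nil => simp
  | cons i α ih =>
    cases σ with
    | nil => simp
    | cons j σ =>
      rw [List.map_cons, List.map_cons, List.prod_cons, List.prod_cons, star_mul, mul_assoc,
        ← mul_assoc (star (W i))]
      by_cases hij : i = j
      · subst hij
        simp [hisom, ih]
      · simp [horth i j hij, hij, Ne.symm hij]

theorem pfx_iff_isPrefix {n : ℕ} {σ α : Wd n} : pfx σ α ↔ σ <+: α :=
  exists_congr fun _ => eq_comm

section WordOp

variable {E : Type*} [NormedAddCommGroup E] [InnerProductSpace ℂ E] {n : ℕ}
  (T : Fin n → (E →L[ℂ] E))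

theorem wordOp_cons (i : Fin n) (α : Wd n) : wordOp T (i :: α) = T i * wordOp T α :=
  List.prod_cons

theorem wordOp_append (α β : Wd n) : wordOp T (α ++ β) = wordOp T α * wordOp T β := by
  simp only [wordOp, List.map_append, List.prod_append]

end WordOp

section Forward

variable {n : ℕ} {S : Set (Wd n)} {L : Wd n → (H →L[ℂ] H)}
  {E : Type*} [NormedAddCommGroup E] [InnerProductSpace ℂ E] [CompleteSpace E]
  {ι : H →ₗᵢ[ℂ] E} {W : Fin n → (E →L[ℂ] E)}

theorem adjoint_mul_eq_of_moment
    (hmoment : ∀ σ ∈ S, ∀ h : H, wordOp W σ (ι ((L ([] : Wd n)) h)) = ι ((L σ) h))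
    {u v : Wd n} (hu : u ∈ S) (hv : v ∈ S) :
    adjoint (L u) * L v = adjoint (ι.toContinuousLinearMap ∘L L []) ∘L
      (star (wordOp W u) * wordOp W v) ∘L (ι.toContinuousLinearMap ∘L L []) := by
  set V := ι.toContinuousLinearMap
  have hV : adjoint V ∘L V = 1 := (norm_map_iff_adjoint_comp_self V).1 ι.norm_map
  have hmoment' : ∀ w ∈ S, V ∘L L w = wordOp W w ∘L V ∘L L [] := fun w hw =>
    ext fun h => (hmoment w hw h).symm
  calc adjoint (L u) * L v = adjoint (V ∘L L u) ∘L (V ∘L L v) := by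
        rw [adjoint_comp, comp_assoc, ← comp_assoc _ V, hV, one_def, id_comp, mul_def]
    _ = _ := by
        rw [hmoment' u hu, hmoment' v hv, adjoint_comp, star_eq_adjoint, mul_def]
        simp only [comp_assoc]

theorem K1_eq_K2_of_moment (hadm : Adm S) (hisom : ∀ i, adjoint (W i) * W i = 1)
    (horth : ∀ i j, i ≠ j → adjoint (W i) * W j = 0)
    (hmoment : ∀ σ ∈ S, ∀ h : H, wordOp W σ (ι ((L ([] : Wd n)) h)) = ι ((L σ) h))
    (x y : {p : Wd n × Wd n // p.1 ++ p.2 ∈ S}) : K1 L x.1 y.1 = K2 L x.1 y.1 := by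
  obtain ⟨⟨α, β⟩, hx⟩ := x
  obtain ⟨⟨σ, γ⟩, hy⟩ := y
  have hword : star (wordOp W α) * wordOp W σ =
      if α <+: σ then wordOp W (σ.drop α.length)
      else if σ <+: α then star (wordOp W (α.drop σ.length)) else 0 :=
    star_prod_map_mul_prod_map W (by simpa only [star_eq_adjoint] using hisom)
      (by simpa only [star_eq_adjoint] using horth) α σ
  simp only [K1, K2, pfx_iff_isPrefix, wq]
  rw [adjoint_mul_eq_of_moment hmoment hx hy, wordOp_append, wordOp_append, star_mul, mul_assoc,
    ← mul_assoc (star (wordOp W α)), hword]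
  split_ifs with h₁ h₂
  · rw [adjoint_mul_eq_of_moment hmoment (hadm _ _ hx)
      (hadm α _ (by rwa [← List.append_assoc, List.prefix_iff_eq_append.1 h₁])), wordOp_append]
  · rw [adjoint_mul_eq_of_moment hmoment
      (hadm σ _ (by rwa [← List.append_assoc, List.prefix_iff_eq_append.1 h₂])) (hadm _ _ hy),
      wordOp_append, star_mul, mul_assoc]
  · simp

end Forward

section ShiftGraph

variable {n : ℕ} {X : Type*} [NormedAddCommGroup X] [InnerProductSpace ℂ X]

def shiftGraph (S : Set (Wd n)) (M : Wd n → (X →L[ℂ] X)) (i : Fin n) : Submodule ℂ (X × X) :=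
  (Submodule.span ℂ (Set.range fun x : {w : Wd n // i :: w ∈ S} × X =>
    (M x.1 x.2, M (i :: x.1) x.2))).topologicalClosure

theorem mem_shiftGraph {S : Set (Wd n)} {M : Wd n → (X →L[ℂ] X)} {i : Fin n} {w : Wd n}
    (hw : i :: w ∈ S) (x : X) : (M w x, M (i :: w) x) ∈ shiftGraph S M i :=
  Submodule.le_topologicalClosure _ (Submodule.subset_span ⟨(⟨w, hw⟩, x), rfl⟩)

end ShiftGraph

section Backward

variable {n : ℕ} {S : Set (Wd n)} {L : Wd n → (H →L[ℂ] H)}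

theorem K2_singleton (i j : Fin n) (u v : Wd n) :
    K2 L ([i], u) ([j], v) = if i = j then adjoint (L u) * L v else 0 := by
  by_cases hij : i = j
  · subst hij
    simp [K2, pfx_iff_isPrefix, wq]
  · simp [K2, pfx_iff_isPrefix, hij, Ne.symm hij]

theorem inner_cons_cons_of_K1_eq_K2
    (hK : ∀ x y : {p : Wd n × Wd n // p.1 ++ p.2 ∈ S}, K1 L x.1 y.1 = K2 L x.1 y.1)
    {i j : Fin n} {u v : Wd n} (hu : i :: u ∈ S) (hv : j :: v ∈ S) (h k : H) :
    ⟪L (i :: u) h, L (j :: v) k⟫_ℂ = (if i = j then 1 else 0) * ⟪L u h, L v k⟫_ℂ := by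
  have := congrArg (fun T => ⟪h, T k⟫_ℂ) (hK ⟨([i], u), hu⟩ ⟨([j], v), hv⟩)
  simp only [K1, K2_singleton, List.singleton_append, mul_apply_eq_comp,
    adjoint_inner_right] at this
  rw [this]
  split_ifs <;> simp [adjoint_inner_right]

theorem inner_snd_of_mem_shiftGraph
    (hK : ∀ x y : {p : Wd n × Wd n // p.1 ++ p.2 ∈ S}, K1 L x.1 y.1 = K2 L x.1 y.1)
    {i j : Fin n} {p q : H × H} (hp : p ∈ shiftGraph S L i) (hq : q ∈ shiftGraph S L j) :
    ⟪p.2, q.2⟫_ℂ = (if i = j then 1 else 0) * ⟪p.1, q.1⟫_ℂ := by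
  refine inner_snd_eq_of_mem_closure_span _ ?_ hp hq
  rintro _ ⟨⟨⟨u, hu⟩, h⟩, rfl⟩ _ ⟨⟨⟨v, hv⟩, k⟩, rfl⟩
  exact inner_cons_cons_of_K1_eq_K2 hK hu hv h k

theorem norm_snd_of_mem_shiftGraph
    (hK : ∀ x y : {p : Wd n × Wd n // p.1 ++ p.2 ∈ S}, K1 L x.1 y.1 = K2 L x.1 y.1)
    {i : Fin n} {p : H × H} (hp : p ∈ shiftGraph S L i) : ‖p.2‖ = ‖p.1‖ := by
  have := inner_snd_of_mem_shiftGraph hK hp hp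
  rw [if_pos rfl, one_mul, inner_self_eq_norm_sq_to_K, inner_self_eq_norm_sq_to_K] at this
  exact (pow_left_inj₀ (norm_nonneg _) (norm_nonneg _) two_ne_zero).1 (by exact_mod_cast this)

theorem nonempty_isomRep_of_K1_eq_K2 (hadm : Adm S)
    (hK : ∀ x y : {p : Wd n × Wd n // p.1 ++ p.2 ∈ S}, K1 L x.1 y.1 = K2 L x.1 y.1) :
    Nonempty (IsomRep n H S L) := by
  have hnorm (i : Fin n) : ∀ p ∈ shiftGraph S L i, ‖p.2‖ = ‖p.1‖ := fun _ =>
    norm_snd_of_mem_shiftGraph hK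
  have (i : Fin n) : ((shiftGraph S L i).map (LinearMap.fst ℂ H H)).HasOrthogonalProjection :=
    have : CompleteSpace ((shiftGraph S L i).map (LinearMap.fst ℂ H H)) :=
      (Submodule.isClosed_map_fst_of_norm_snd_eq
        (Submodule.isClosed_topologicalClosure _) (hnorm i)).completeSpace_coe
    inferInstance
  let K i := (shiftGraph S L i).map (LinearMap.fst ℂ H H)
  let A i := partialIsometryOfGraph (shiftGraph S L i) (hnorm i)
  have hA (i j : Fin n) (x y : H) : ⟪A i x, A j y⟫_ℂ =
      if i = j then ⟪(K i).starProjection x, (K j).starProjection y⟫_ℂ else 0 := by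
    rw [inner_snd_of_mem_shiftGraph hK (starProjection_partialIsometryOfGraph_mem _ x)
      (starProjection_partialIsometryOfGraph_mem _ y)]
    split_ifs
    · rw [one_mul]
    · rw [zero_mul]
  refine ⟨⟨ℓ²(Wd n, H), lp.vacuum ℂ (Fin n) H, fockDilation K A, fun i => ?_,
    fun i j hij => ?_, ?_⟩⟩
  · exact adjoint_mul_eq_of_inner fun f g => by
      rw [inner_fockDilation K A hA, if_pos rfl, one_apply_eq_self]
  · exact adjoint_mul_eq_of_inner fun f g => by
      rw [inner_fockDilation K A hA, if_neg hij, zero_apply, inner_zero_right]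
  · intro σ hσ h
    induction σ with
    | nil => rfl
    | cons i σ ih =>
      have hmem := mem_shiftGraph (M := L) hσ h
      rw [wordOp_cons, mul_apply_eq_comp, ih (hadm [i] σ hσ),
        fockDilation_vacuum K A (x := L σ h) ⟨_, hmem, rfl⟩,
        partialIsometryOfGraph_apply_fst _ hmem]

end Backward

theorem stmt3_general {n : ℕ} (S : Set (Wd n)) (hadm : Adm S)
    (L : Wd n → (H →L[ℂ] H)) :
    Nonempty (IsomRep n H S L) ↔
      ∀ x y : {p : Wd n × Wd n // p.1 ++ p.2 ∈ S}, K1 L x.1 y.1 = K2 L x.1 y.1 := by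
  refine ⟨?_, nonempty_isomRep_of_K1_eq_K2 hadm⟩
  rintro ⟨⟨E, ι, W, hisom, horth, hmoment⟩⟩
  exact K1_eq_K2_of_moment hadm hisom horth hmoment

/-- There is a *-representation `π` of `C*(S₁,…,Sₙ)` on `E ⊇ H` with
`L(p) = π(p(S₁,…,Sₙ)) L(g₀)` for all `p ∈ ℂΣ` (stated via isometries with orthogonal
ranges) iff `K₁ = K₂` on `Λ_Σ`. -/
theorem stmt3 {n : ℕ} (hn : 0 < n) (S : Set (Wd n)) (hne : S.Nonempty) (hadm : Adm S)
    (L : Wd n → (H →L[ℂ] H)) :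
    Nonempty (IsomRep n H S L) ↔
      ∀ x y : {p : Wd n × Wd n // p.1 ++ p.2 ∈ S}, K1 L x.1 y.1 = K2 L x.1 y.1 :=
  stmt3_general S hadm L

end
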